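/- I(0) = 0, and I(t) = 0 for every real t ≥ 2. -/

import Mathlib

open MeasureTheory Real intervalIntegral

/-- `log⁺ r = log (max 1 r)`. -/
noncomputable def logPlus (r : ℝ) : ℝ := Real.log (max 1 r)

/-- `I(t) = ∫₀¹ log⁺ |t + e^{2πiθ}| dθ − log⁺ t`. -/
noncomputable def Ifun (t : ℝ) : ℝ :=
  (∫ θ in (0:ℝ)..1, logPlus (‖(t + Complex.exp (2 * Real.pi * Complex.I * θ))‖))
    - logPlus t

/-!
Parametrising the unit circle by `θ ↦ e^{2πiθ}` turns the integral in `I(t)` into the circle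
average of `z ↦ log⁺ |t + z|`. For `t ≥ 2` the circle stays in `|w| ≥ 1`, where `log⁺ = log`,
and `log |t + z|` is harmonic on a neighbourhood of the closed unit disc, so its average is its
value `log t` at the centre. For `t = 0` the integrand vanishes identically.
-/

lemma logPlus_of_one_le {r : ℝ} (hr : 1 ≤ r) : logPlus r = Real.log r := by
  rw [logPlus, max_eq_right hr]

lemma logPlus_of_le_one {r : ℝ} (hr : r ≤ 1) : logPlus r = 0 := by
  rw [logPlus, max_eq_left hr, Real.log_one]

lemma intervalIntegral_comp_exp_two_pi_mul_I {E : Type*} [NormedAddCommGroup E]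
    [NormedSpace ℝ E] (f : ℂ → E) :
    ∫ θ in (0:ℝ)..1, f (Complex.exp (2 * π * Complex.I * θ)) = circleAverage f 0 1 := by
  have hsub := intervalIntegral.integral_comp_mul_left (a := 0) (b := 1)
    (fun θ : ℝ => f (circleMap 0 1 θ)) (two_pi_pos.ne')
  simp only [mul_zero, mul_one] at hsub
  rw [circleAverage_def, ← hsub]
  congr 1 with θ
  simp only [circleMap, Complex.ofReal_one, one_mul, zero_add, Complex.ofReal_mul,
    Complex.ofReal_ofNat]
  ring_nf

lemma circleAverage_logPlus_norm_add_const {a : ℂ} (ha : 2 ≤ ‖a‖) :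
    circleAverage (fun z => logPlus ‖a + z‖) 0 1 = logPlus ‖a‖ := by
  have h_on_circle : Set.EqOn (fun z => logPlus ‖a + z‖) (fun z => Real.log ‖z + a‖)
      (Metric.sphere 0 |1|) := by
    intro z hz
    rw [abs_one, mem_sphere_zero_iff_norm] at hz
    have h_one_le : 1 ≤ ‖a + z‖ := by
      have h_tri := norm_sub_norm_le a (-z)
      rw [norm_neg, sub_neg_eq_add] at h_tri
      linarith
    exact (logPlus_of_one_le h_one_le).trans (by rw [add_comm])
  rw [circleAverage_congr_sphere h_on_circle, circleAverage_log_norm_add_const_eq_posLog,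
    posLog_eq_log (by rw [abs_norm]; linarith), logPlus_of_one_le (by linarith)]

lemma Ifun_eq_circleAverage (t : ℝ) :
    Ifun t = circleAverage (fun z => logPlus ‖(t : ℂ) + z‖) 0 1 - logPlus t :=
  congrArg (· - logPlus t)
    (intervalIntegral_comp_exp_two_pi_mul_I fun z => logPlus ‖(t : ℂ) + z‖)

theorem stmt2 : Ifun 0 = 0 ∧ ∀ t : ℝ, 2 ≤ t → Ifun t = 0 := by
  refine ⟨?_, fun t ht => ?_⟩
  · rw [Ifun_eq_circleAverage, logPlus_of_le_one zero_le_one, sub_zero]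
    refine circleAverage_const_on_circle fun z hz => ?_
    rw [abs_one, mem_sphere_zero_iff_norm] at hz
    rw [Complex.ofReal_zero, zero_add, hz, logPlus_of_le_one le_rfl]
  · have ht' : 2 ≤ ‖(t : ℂ)‖ := by rwa [Complex.norm_real, norm_of_nonneg (by linarith)]
    rw [Ifun_eq_circleAverage, circleAverage_logPlus_norm_add_const ht', Complex.norm_real,
      norm_of_nonneg (by linarith), sub_self]
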